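/- For every Pierce sequence σ ∈ Σ and every n ≥ 1, |φ(σ) - φ(σ^{(n)})| ≤ 1/(σ_1···σ_n σ_{n+1}) and |E*(σ) - E*(σ^{(n)})| ≤ n/(σ_1···σ_n σ_{n+1}), where σ^{(n)} is the sequence agreeing with σ in the first n terms and equal to ∞ afterwards. -/

import Mathlib

open scoped BigOperators

/-- Reciprocal of an extended natural number as a real, with `1/∞ = 0`. -/
noncomputable def pinv (a : ℕ∞) : ℝ := ((a.toNat : ℕ) : ℝ)⁻¹

/-- First Pierce digit: `⌊1/x⌋` for `x ≠ 0`, and `∞` for `x = 0`. -/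
noncomputable def pd1 (x : ℝ) : ℕ∞ := if x = 0 then ⊤ else (⌊x⁻¹⌋₊ : ℕ∞)

/-- Pierce map `T(x) = 1 - ⌊1/x⌋ x` for `x ≠ 0`, `T(0) = 0`. -/
noncomputable def pT (x : ℝ) : ℝ := if x = 0 then 0 else 1 - (⌊x⁻¹⌋₊ : ℝ) * x

/-- `n`-th Pierce digit `d_n(x) = d_1(T^{n-1} x)` (for `n ≥ 1`). -/
noncomputable def pdig (n : ℕ) (x : ℝ) : ℕ∞ := pd1 (pT^[n-1] x)

/-- `1/(d_1(x) ⋯ d_n(x))`, with the convention that a factor `∞` makes it `0`. -/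
noncomputable def pprodR (n : ℕ) (x : ℝ) : ℝ := ∏ k ∈ Finset.Icc 1 n, pinv (pdig k x)

/-- `n`-th partial sum `s_n(x)` of the Pierce expansion of `x`. -/
noncomputable def psum (n : ℕ) (x : ℝ) : ℝ :=
  ∑ k ∈ Finset.Icc 1 n, (-1 : ℝ) ^ (k + 1) * pprodR k x

/-- The error-sum function of Pierce expansions `E(x) = Σ_{n≥1} (x - s_n(x))`. -/
noncomputable def pE (x : ℝ) : ℝ := ∑' n : ℕ, (x - psum (n + 1) x)

/-- A Pierce sequence (0-indexed: `σ k` is the paper's `σ_{k+1}`): terms are positive, strictly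
increasing while finite, and once a term is `∞` all later terms are `∞`. -/
def IsPierce (σ : ℕ → ℕ∞) : Prop :=
  1 ≤ σ 0 ∧ ∀ n, σ n < σ (n + 1) ∨ (σ n = ⊤ ∧ σ (n + 1) = ⊤)

/-- `n`-th partial sum `φ_n(σ)`. -/
noncomputable def pphiN (n : ℕ) (σ : ℕ → ℕ∞) : ℝ :=
  ∑ k ∈ Finset.range n, (-1 : ℝ) ^ k * ∏ i ∈ Finset.range (k + 1), pinv (σ i)

/-- `φ(σ) = Σ_{k≥1} (-1)^{k+1}/(σ_1 ⋯ σ_k)`. -/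
noncomputable def pphi (σ : ℕ → ℕ∞) : ℝ :=
  ∑' k : ℕ, (-1 : ℝ) ^ k * ∏ i ∈ Finset.range (k + 1), pinv (σ i)

/-- The error-sum function of Pierce sequences `E*(σ) = Σ_{n≥1} (φ(σ) - φ_n(σ))`. -/
noncomputable def pEstar (σ : ℕ → ℕ∞) : ℝ := ∑' n : ℕ, (pphi σ - pphiN (n + 1) σ)

/-- The series formula `Σ_{n≥1} (-1)^n n/(σ_1 ⋯ σ_{n+1})` for the error-sum of a sequence. -/
noncomputable def pEstarSeries (σ : ℕ → ℕ∞) : ℝ :=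
  ∑' n : ℕ, (-1 : ℝ) ^ (n + 1) * (n + 1) * ∏ i ∈ Finset.range (n + 2), pinv (σ i)

/-- The metric `ρ(x,y) = 1/x + 1/y` for `x ≠ y` (with `1/∞ = 0`), `ρ(x,x) = 0`. -/
noncomputable def prho (x y : ℕ∞) : ℝ := if x = y then 0 else pinv x + pinv y

/-- The metric `ρ^ℕ(σ,τ) = Σ_{n≥1} ρ(σ_n, τ_n)/n!` on sequences. -/
noncomputable def prhoN (σ τ : ℕ → ℕ∞) : ℝ :=
  ∑' n : ℕ, prho (σ n) (τ n) / ((n + 1).factorial : ℝ)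

/-- Truncation `σ^{(n)}`: the first `n` terms of `σ` followed by `∞`'s. -/
def ptrunc (σ : ℕ → ℕ∞) (n : ℕ) : ℕ → ℕ∞ := fun k => if k < n then σ k else ⊤

/-!
Both series are alternating. Since `σ_k ≥ k`, the products `P_k = 1/(σ_1 ⋯ σ_k)` satisfy
`(k + 1) P_{k+1} ≤ P_k` and `P_k ≤ 1/k!`, so the terms `P_k` of `φ` and `k P_{k+1}` of `E*`
decrease and are summable. Truncating `σ` after `n` terms replaces `P_k` by `0` for `k > n` and
keeps it for `k ≤ n`, so both differences are tails of alternating series with decreasing terms,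
bounded by their first terms `P_{n+1}` and `n P_{n+1}`.
-/

open Finset

section ProdRange

variable {x : ℕ → ℝ}

lemma prod_range_le_inv_factorial (hx0 : ∀ i, 0 ≤ x i) (hx : ∀ i, x i ≤ ((i : ℝ) + 1)⁻¹)
    (k : ℕ) : ∏ i ∈ range k, x i ≤ (k.factorial : ℝ)⁻¹ := by
  induction k with
  | zero => simp
  | succ k ih =>
    rw [prod_range_succ, Nat.factorial_succ, Nat.cast_mul, mul_inv, Nat.cast_succ,
      mul_comm ((k : ℝ) + 1)⁻¹]
    exact mul_le_mul ih (hx k) (hx0 k) (by positivity)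

lemma succ_mul_prod_range_succ_le (hx0 : ∀ i, 0 ≤ x i) (hx : ∀ i, x i ≤ ((i : ℝ) + 1)⁻¹)
    (k : ℕ) : ((k : ℝ) + 1) * ∏ i ∈ range (k + 1), x i ≤ ∏ i ∈ range k, x i := by
  have hk : (0 : ℝ) < k + 1 := by positivity
  have hxk : ((k : ℝ) + 1) * x k ≤ 1 :=
    (mul_le_mul_of_nonneg_left (hx k) hk.le).trans_eq (mul_inv_cancel₀ hk.ne')
  calc ((k : ℝ) + 1) * ∏ i ∈ range (k + 1), x i
      = (∏ i ∈ range k, x i) * (((k : ℝ) + 1) * x k) := by rw [prod_range_succ]; ring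
    _ ≤ ∏ i ∈ range k, x i := mul_le_of_le_one_right (prod_nonneg fun i _ => hx0 i) hxk

lemma antitone_prod_range (hx0 : ∀ i, 0 ≤ x i) (hx : ∀ i, x i ≤ ((i : ℝ) + 1)⁻¹) :
    Antitone fun k => ∏ i ∈ range k, x i := by
  refine antitone_nat_of_succ_le fun k => ?_
  have hP : 0 ≤ ∏ i ∈ range (k + 1), x i := prod_nonneg fun i _ => hx0 i
  linarith [succ_mul_prod_range_succ_le hx0 hx k,
    mul_nonneg (Nat.cast_nonneg k : (0 : ℝ) ≤ k) hP]

lemma summable_prod_range (hx0 : ∀ i, 0 ≤ x i) (hx : ∀ i, x i ≤ ((i : ℝ) + 1)⁻¹) :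
    Summable fun k => ∏ i ∈ range k, x i := by
  refine Summable.of_nonneg_of_le (fun k => prod_nonneg fun i _ => hx0 i)
    (prod_range_le_inv_factorial hx0 hx) ?_
  simpa using Real.summable_pow_div_factorial 1

lemma antitone_succ_mul_prod_range (hx0 : ∀ i, 0 ≤ x i) (hx : ∀ i, x i ≤ ((i : ℝ) + 1)⁻¹) :
    Antitone fun k : ℕ => ((k : ℝ) + 1) * ∏ i ∈ range (k + 2), x i := by
  refine antitone_nat_of_succ_le fun k => ?_
  have hP : 0 ≤ ∏ i ∈ range (k + 2), x i := prod_nonneg fun i _ => hx0 i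
  have hP' : 0 ≤ ∏ i ∈ range (k + 2 + 1), x i := prod_nonneg fun i _ => hx0 i
  have hstep := succ_mul_prod_range_succ_le hx0 hx (k + 2)
  rw [show k + 1 + 2 = k + 2 + 1 by ring]
  push_cast at hstep ⊢
  linarith [mul_nonneg (Nat.cast_nonneg k : (0 : ℝ) ≤ k) hP]

lemma summable_succ_mul_prod_range (hx0 : ∀ i, 0 ≤ x i) (hx : ∀ i, x i ≤ ((i : ℝ) + 1)⁻¹) :
    Summable fun k : ℕ => ((k : ℝ) + 1) * ∏ i ∈ range (k + 2), x i := by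
  refine Summable.of_nonneg_of_le
    (fun k => mul_nonneg (by positivity) (prod_nonneg fun i _ => hx0 i)) (fun k => ?_)
    ((summable_nat_add_iff 1).mpr (summable_prod_range hx0 hx))
  have hP : 0 ≤ ∏ i ∈ range (k + 2), x i := prod_nonneg fun i _ => hx0 i
  have hstep := succ_mul_prod_range_succ_le hx0 hx (k + 1)
  push_cast at hstep
  linarith

end ProdRange

lemma pinv_nonneg (a : ℕ∞) : 0 ≤ pinv a := by unfold pinv; positivity

@[simp] lemma pinv_top : pinv ⊤ = 0 := by simp [pinv]

lemma IsPierce.succ_le {σ : ℕ → ℕ∞} (hσ : IsPierce σ) (i : ℕ) : (i : ℕ∞) + 1 ≤ σ i := by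
  induction i with
  | zero => simpa using hσ.1
  | succ k ih =>
    rcases hσ.2 k with h | ⟨-, h⟩
    · push_cast
      exact (add_le_add ih le_rfl).trans (Order.add_one_le_of_lt h)
    · simp [h]

lemma IsPierce.pinv_le {σ : ℕ → ℕ∞} (hσ : IsPierce σ) (i : ℕ) :
    pinv (σ i) ≤ ((i : ℝ) + 1)⁻¹ := by
  rcases eq_or_ne (σ i) ⊤ with h | h
  · rw [h, pinv_top]; positivity
  · have hle := hσ.succ_le i
    rw [← ENat.natCast_toNat h] at hle
    have hle' : i + 1 ≤ (σ i).toNat := by exact_mod_cast hle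
    unfold pinv
    gcongr
    exact_mod_cast hle'

lemma prod_range_pinv_ptrunc (σ : ℕ → ℕ∞) (n k : ℕ) :
    ∏ i ∈ range k, pinv (ptrunc σ n i) = if k ≤ n then ∏ i ∈ range k, pinv (σ i) else 0 := by
  split_ifs with hk
  · exact prod_congr rfl fun i hi => by simp [ptrunc, (mem_range.mp hi).trans_le hk]
  · exact prod_eq_zero (mem_range.mpr (not_le.mp hk)) (by simp [ptrunc])

lemma pphi_ptrunc (σ : ℕ → ℕ∞) (n : ℕ) : pphi (ptrunc σ n) = pphiN n σ := by
  rw [pphi, tsum_eq_sum (s := range n) fun k hk => ?_]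
  · refine sum_congr rfl fun k hk => ?_
    rw [prod_range_pinv_ptrunc, if_pos (show k + 1 ≤ n from mem_range.mp hk)]
  · rw [prod_range_pinv_ptrunc, if_neg (by simpa using hk), mul_zero]

lemma pEstarSeries_ptrunc (σ : ℕ → ℕ∞) (n : ℕ) :
    pEstarSeries (ptrunc σ (n + 1)) =
      ∑ k ∈ range n, (-1 : ℝ) ^ (k + 1) * (k + 1) * ∏ i ∈ range (k + 2), pinv (σ i) := by
  rw [pEstarSeries, tsum_eq_sum (s := range n) fun k hk => ?_]
  · refine sum_congr rfl fun k hk => ?_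
    rw [prod_range_pinv_ptrunc, if_pos (by simpa using hk)]
  · rw [prod_range_pinv_ptrunc, if_neg (by simpa using hk), mul_zero]

lemma IsPierce.abs_pphi_sub_pphi_ptrunc_le {σ : ℕ → ℕ∞} (hσ : IsPierce σ) (n : ℕ) :
    |pphi σ - pphi (ptrunc σ n)| ≤ ∏ i ∈ range (n + 1), pinv (σ i) := by
  have h0 : ∀ i, 0 ≤ pinv (σ i) := fun i => pinv_nonneg (σ i)
  have hanti : Antitone fun k => ∏ i ∈ range (k + 1), pinv (σ i) :=
    fun _ _ h => antitone_prod_range h0 hσ.pinv_le (Nat.succ_le_succ h)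
  have hs : Summable fun k => ∏ i ∈ range (k + 1), pinv (σ i) :=
    (summable_nat_add_iff (f := fun k => ∏ i ∈ range k, pinv (σ i)) 1).mpr
      (summable_prod_range h0 hσ.pinv_le)
  rw [pphi_ptrunc]
  exact alternating_series_error_bound _ hanti hs n

lemma IsPierce.abs_pEstarSeries_sub_pEstarSeries_ptrunc_le {σ : ℕ → ℕ∞} (hσ : IsPierce σ)
    (n : ℕ) : |pEstarSeries σ - pEstarSeries (ptrunc σ (n + 1))| ≤
      ((n : ℝ) + 1) * ∏ i ∈ range (n + 2), pinv (σ i) := by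
  have h0 : ∀ i, 0 ≤ pinv (σ i) := fun i => pinv_nonneg (σ i)
  set b : ℕ → ℝ := fun k => ((k : ℝ) + 1) * ∏ i ∈ range (k + 2), pinv (σ i)
  have hterm : ∀ k : ℕ, (-1 : ℝ) ^ (k + 1) * (k + 1) * ∏ i ∈ range (k + 2), pinv (σ i) =
      -((-1) ^ k * b k) := fun k => by simp only [b]; ring
  have hdiff : pEstarSeries σ - pEstarSeries (ptrunc σ (n + 1)) =
      -(∑' k, (-1) ^ k * b k - ∑ k ∈ range n, (-1) ^ k * b k) := by
    rw [pEstarSeries_ptrunc, pEstarSeries, tsum_congr hterm, sum_congr rfl fun k _ => hterm k,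
      tsum_neg, sum_neg_distrib]
    ring
  rw [hdiff, abs_neg]
  exact alternating_series_error_bound b (antitone_succ_mul_prod_range h0 hσ.pinv_le)
    (summable_succ_mul_prod_range h0 hσ.pinv_le) n

theorem stmt19 (σ : ℕ → ℕ∞) (hσ : IsPierce σ) (n : ℕ) (hn : 1 ≤ n) :
    |pphi σ - pphi (ptrunc σ n)| ≤ ∏ i ∈ Finset.range (n + 1), pinv (σ i) ∧
    |pEstarSeries σ - pEstarSeries (ptrunc σ n)| ≤
      (n : ℝ) * ∏ i ∈ Finset.range (n + 1), pinv (σ i) := by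
  obtain ⟨m, rfl⟩ := Nat.exists_eq_add_one_of_ne_zero (Nat.one_le_iff_ne_zero.mp hn)
  refine ⟨hσ.abs_pphi_sub_pphi_ptrunc_le _, ?_⟩
  push_cast
  exact hσ.abs_pEstarSeries_sub_pEstarSeries_ptrunc_le m
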